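/- Let Γ be a strictly Deza graph with parameters (n, k, b, a) with k = b + 1 and β(v) > 1 for every vertex v. If x is a vertex of type (A), then the subgraph of Γ induced on B[x] = B(x) ∪ {x} is a coclique (independent set) of size β(x) + 1. -/

import Mathlib

open Finset SimpleGraph

universe u v

/-- The number of common neighbours of two vertices. -/
def commonNbrs {V : Type u} [Fintype V] [DecidableEq V] (G : SimpleGraph V)
    [DecidableRel G.Adj] (x y : V) : ℕ :=
  (G.neighborFinset x ∩ G.neighborFinset y).card

/-- `G` is a Deza graph with parameters `(n, k, b, a)`: a nonempty `k`-regular graph on `n`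
vertices in which any two distinct vertices have either `b` or `a` common neighbours,
where `b ≥ a`. -/
def IsDezaGraph {V : Type u} [Fintype V] [DecidableEq V] (G : SimpleGraph V)
    [DecidableRel G.Adj] (n k b a : ℕ) : Prop :=
  G ≠ ⊥ ∧ Fintype.card V = n ∧ G.IsRegularOfDegree k ∧ a ≤ b ∧
    ∀ x y : V, x ≠ y → commonNbrs G x y = b ∨ commonNbrs G x y = a

/-- `G` is a strictly Deza graph with parameters `(n, k, b, a)`: a Deza graph of
diameter 2 that is not strongly regular. -/
def IsStrictlyDezaGraph {V : Type u} [Fintype V] [DecidableEq V] (G : SimpleGraph V)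
    [DecidableRel G.Adj] (n k b a : ℕ) : Prop :=
  IsDezaGraph G n k b a ∧ G.Connected ∧ (∀ x y : V, G.dist x y ≤ 2) ∧
    (∃ x y : V, G.dist x y = 2) ∧ ¬ ∃ ℓ μ : ℕ, G.IsSRGWith n k ℓ μ

/-- `B(v)`: the set of vertices `u ≠ v` having exactly `b` common neighbours with `v`. -/
def dezaB {V : Type u} [Fintype V] [DecidableEq V] (G : SimpleGraph V)
    [DecidableRel G.Adj] (b : ℕ) (v : V) : Finset V :=
  univ.filter fun u => u ≠ v ∧ commonNbrs G u v = b

/-- `A(v)`: the set of vertices `u ≠ v` having exactly `a` common neighbours with `v`. -/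
def dezaA {V : Type u} [Fintype V] [DecidableEq V] (G : SimpleGraph V)
    [DecidableRel G.Adj] (a : ℕ) (v : V) : Finset V :=
  univ.filter fun u => u ≠ v ∧ commonNbrs G u v = a

/-- `B[v] = B(v) ∪ {v}`. -/
def dezaBc {V : Type u} [Fintype V] [DecidableEq V] (G : SimpleGraph V)
    [DecidableRel G.Adj] (b : ℕ) (v : V) : Finset V :=
  insert v (dezaB G b v)

/-- A vertex `v` is of type (A) if `B(v) ∩ N(v) = ∅`. -/
def IsTypeA {V : Type u} [Fintype V] [DecidableEq V] (G : SimpleGraph V)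
    [DecidableRel G.Adj] (b : ℕ) (v : V) : Prop :=
  dezaB G b v ∩ G.neighborFinset v = ∅

/-- A vertex `v` is of type (B) if `B(v) ⊆ N(v)`. -/
def IsTypeB {V : Type u} [Fintype V] [DecidableEq V] (G : SimpleGraph V)
    [DecidableRel G.Adj] (b : ℕ) (v : V) : Prop :=
  dezaB G b v ⊆ G.neighborFinset v

/-- A vertex `v` is of type (C) if `|B(v) ∩ N(v)| = 1`. -/
def IsTypeC {V : Type u} [Fintype V] [DecidableEq V] (G : SimpleGraph V)
    [DecidableRel G.Adj] (b : ℕ) (v : V) : Prop :=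
  (dezaB G b v ∩ G.neighborFinset v).card = 1

/-- A vertex `x` of type (A) is of type (A1) if there exists `y ∈ N(x)` with
`N(x) \ N(xᵢ) = {y}` for every `xᵢ ∈ B(x)`. -/
def IsTypeA1 {V : Type u} [Fintype V] [DecidableEq V] (G : SimpleGraph V)
    [DecidableRel G.Adj] (b : ℕ) (x : V) : Prop :=
  IsTypeA G b x ∧ ∃ y ∈ G.neighborFinset x,
    ∀ xi ∈ dezaB G b x, G.neighborFinset x \ G.neighborFinset xi = {y}

/-- A vertex `x` of type (A) is of type (A2) if there exists `z ∉ N[x]` with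
`N(xᵢ) \ N(x) = {z}` for every `xᵢ ∈ B(x)`. -/
def IsTypeA2 {V : Type u} [Fintype V] [DecidableEq V] (G : SimpleGraph V)
    [DecidableRel G.Adj] (b : ℕ) (x : V) : Prop :=
  IsTypeA G b x ∧ ∃ z ∉ insert x (G.neighborFinset x),
    ∀ xi ∈ dezaB G b x, G.neighborFinset xi \ G.neighborFinset x = {z}

/-- The complete multipartite graph with `m` parts of size `t`. -/
def completeMultipartiteGr (m t : ℕ) : SimpleGraph (Fin m × Fin t) where
  Adj u v := u.1 ≠ v.1
  symm := ⟨fun _ _ h => Ne.symm h⟩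
  loopless := ⟨fun _ h => h rfl⟩

/-- The 2-clique extension of a graph `H`: vertices `(u, i)` and `(v, j)` are adjacent
iff `u ~ v` in `H`, or `u = v` and `i ≠ j`. -/
def cliqueExt2 {W : Type v} (H : SimpleGraph W) : SimpleGraph (W × Fin 2) where
  Adj u v := H.Adj u.1 v.1 ∨ (u.1 = v.1 ∧ u.2 ≠ v.2)
  symm := by
    constructor
    intro u v h
    rcases h with h | ⟨h1, h2⟩
    · exact Or.inl h.symm
    · exact Or.inr ⟨h1.symm, h2.symm⟩
  loopless := by
    constructor
    intro u h
    rcases h with h | ⟨_, h2⟩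
    · exact H.loopless.irrefl _ h
    · exact h2 rfl

/-
Let `u, w ∈ B(x)` be adjacent; by type (A) neither is adjacent to `x`. Since `k = b + 1`, two
vertices with `b` common neighbours have neighbourhoods differing in exactly one vertex, so
`N(u) \ N(x) = {w}`, `N(x) \ N(u) = {y_u}` and `N(x) \ N(w) = {y_w}`. Type (A) also means that every
neighbour of `x` has `a < b` common neighbours with `x`, and a vertex adjacent to both `u` and `x`
has `a` common neighbours with `u`. If `y_u = y_w = y`, comparing these two counts shows that `y` is
adjacent to the other `b` neighbours of `x`, contradicting type (A). Otherwise
`N(u) ∩ N(w) ⊇ N(x) \ {y_u, y_w}`, while `y_w ∈ N(u) \ N(w)` keeps it from having `b` elements, so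
`a = b - 1`. For `b ≥ 2` a common neighbour of `u` and `w` is then adjacent to `x`, `u`, `w` and to
`a` neighbours of `x`, more than `b + 1` vertices; for `b = 1` the graph is forced to be the
pentagon, which is strongly regular.
-/

section Diameter

variable {V : Type u} {G : SimpleGraph V}

theorem SimpleGraph.Connected.commonNeighbors_nonempty_of_dist_le_two (hconn : G.Connected)
    {v w : V} (hd : G.dist v w ≤ 2) (hne : v ≠ w) (hnadj : ¬ G.Adj v w) :
    (G.commonNeighbors v w).Nonempty := by
  have hlt : 1 < G.dist v w := hconn.one_lt_dist_of_ne_of_not_adj hne hnadj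
  have h2 : G.edist v w = 2 := by
    rw [← (hconn.preconnected v w).coe_dist_eq_edist]
    norm_cast
    omega
  exact (edist_eq_two_iff.mp h2).2.2

end Diameter

section Deza

variable {V : Type u} [Fintype V] [DecidableEq V] {G : SimpleGraph V} [DecidableRel G.Adj]
  {n k b a : ℕ} {p q r u w x y z : V}

theorem commonNbrs_comm (p q : V) : commonNbrs G p q = commonNbrs G q p := by
  rw [commonNbrs, commonNbrs, inter_comm]

theorem card_commonNeighbors_eq_commonNbrs (p q : V) :
    Fintype.card (G.commonNeighbors p q) = commonNbrs G p q := by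
  rw [commonNbrs, ← Set.toFinset_card]
  congr 1
  ext
  simp [mem_commonNeighbors]

theorem isSRGWith_of_commonNbrs {ℓ μ : ℕ} (hcard : Fintype.card V = n)
    (hreg : G.IsRegularOfDegree k) (hadj : ∀ v w, G.Adj v w → commonNbrs G v w = ℓ)
    (hnadj : ∀ v w, v ≠ w → ¬ G.Adj v w → commonNbrs G v w = μ) : G.IsSRGWith n k ℓ μ where
  card := hcard
  regular := hreg
  of_adj v w h := by rw [card_commonNeighbors_eq_commonNbrs, hadj v w h]
  of_not_adj v w hne h := by rw [card_commonNeighbors_eq_commonNbrs, hnadj v w hne h]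

theorem IsStrictlyDezaGraph.lt (hG : IsStrictlyDezaGraph G n k b a) : a < b := by
  obtain ⟨⟨-, hcard, hreg, hab, hpairs⟩, -, -, -, hnsrg⟩ := hG
  refine lt_of_le_of_ne hab fun hba => hnsrg ⟨a, a, isSRGWith_of_commonNbrs hcard hreg ?_ ?_⟩
  · intro v w h
    exact (hpairs v w h.ne).elim (· ▸ hba.symm) id
  · intro v w hne _
    exact (hpairs v w hne).elim (· ▸ hba.symm) id

theorem card_neighborFinset_sdiff_eq_one (hreg : G.IsRegularOfDegree (b + 1))
    (h : commonNbrs G p q = b) : (G.neighborFinset p \ G.neighborFinset q).card = 1 := by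
  have := card_inter_add_card_sdiff (G.neighborFinset p) (G.neighborFinset q)
  rw [card_neighborFinset_eq_degree, hreg p] at this
  unfold commonNbrs at h
  omega

theorem exists_adj_not_adj_of_commonNbrs_eq (hreg : G.IsRegularOfDegree (b + 1))
    (h : commonNbrs G p q = b) : ∃ y, G.Adj p y ∧ ¬ G.Adj q y := by
  obtain ⟨y, hy⟩ := card_pos.mp (card_neighborFinset_sdiff_eq_one hreg h).ge
  exact ⟨y, by simpa using hy⟩

theorem adj_of_commonNbrs_eq (hreg : G.IsRegularOfDegree (b + 1)) (h : commonNbrs G p q = b)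
    (hpz : G.Adj p z) (hqz : ¬ G.Adj q z) (hpr : G.Adj p r) (hrz : r ≠ z) : G.Adj q r := by
  by_contra hqr
  exact hrz (card_le_one.mp (card_neighborFinset_sdiff_eq_one hreg h).le r (by simp [hpr, hqr]) z
    (by simp [hpz, hqz]))

theorem adj_of_commonNbrs_le (hy : ∀ r, G.Adj x r → r ≠ y → G.Adj u r) (hpw : G.Adj p w)
    (huw : G.Adj u w) (hxw : ¬ G.Adj x w) (h : commonNbrs G p u ≤ commonNbrs G p x) :
    G.Adj p y := by
  by_contra hpy
  have hsub : insert w (G.neighborFinset p ∩ G.neighborFinset x) ⊆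
      G.neighborFinset p ∩ G.neighborFinset u := by
    intro r
    simp only [mem_insert, mem_inter, mem_neighborFinset]
    rintro (rfl | ⟨hpr, hxr⟩)
    · exact ⟨hpw, huw⟩
    · exact ⟨hpr, hy r hxr (by rintro rfl; exact hpy hpr)⟩
  have := card_le_card hsub
  rw [card_insert_of_notMem (by simp [hxw])] at this
  unfold commonNbrs at h
  omega

theorem SimpleGraph.IsRegularOfDegree.eq_or_eq_of_adj (hreg : G.IsRegularOfDegree 2)
    (hpq : G.Adj p q) (hpr : G.Adj p r) (hqr : q ≠ r) (hpz : G.Adj p z) : z = q ∨ z = r := by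
  have hN : G.neighborFinset p = {q, r} :=
    (eq_of_subset_of_card_le (by simp [insert_subset_iff, hpq, hpr])
      (by rw [card_neighborFinset_eq_degree, hreg p, card_pair hqr])).symm
  simpa [hN] using (G.mem_neighborFinset p z).mpr hpz

theorem eq_or_eq_or_eq_of_adj_of_adj_of_adj (hreg : G.IsRegularOfDegree 2) (hconn : G.Connected)
    (hdiam : ∀ v w, G.dist v w ≤ 2) (hpq : G.Adj p q) (hpr : G.Adj p r) (hqr : G.Adj q r)
    (z : V) : z = p ∨ z = q ∨ z = r := by
  by_cases hpz : p = z
  · exact Or.inl hpz.symm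
  by_cases hadj : G.Adj p z
  · exact Or.inr (hreg.eq_or_eq_of_adj hpq hpr hqr.ne hadj)
  obtain ⟨m, hm⟩ := hconn.commonNeighbors_nonempty_of_dist_le_two (hdiam p z) hpz hadj
  rw [mem_commonNeighbors] at hm
  rcases hreg.eq_or_eq_of_adj hpq hpr hqr.ne hm.1 with rfl | rfl
  · have := hreg.eq_or_eq_of_adj hpq.symm hqr hpr.ne hm.2.symm
    tauto
  · have := hreg.eq_or_eq_of_adj hpr.symm hqr.symm hpq.ne hm.2.symm
    tauto

theorem not_isStrictlyDezaGraph_two_one_zero : ¬ IsStrictlyDezaGraph G n 2 1 0 := by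
  rintro ⟨⟨-, hcard, hreg, -, hpairs⟩, hconn, hdiam, ⟨z₁, z₂, hz⟩, hnsrg⟩
  refine hnsrg ⟨0, 1, isSRGWith_of_commonNbrs hcard hreg (fun v v' hvv' => ?_)
    (fun v w hne hnadj => ?_)⟩
  · refine (hpairs v v' hvv'.ne).resolve_left fun h1 => ?_
    obtain ⟨r, hr⟩ := card_pos.mp (show 0 < commonNbrs G v v' by omega)
    simp only [mem_inter, mem_neighborFinset] at hr
    have hT := eq_or_eq_or_eq_of_adj_of_adj_of_adj hreg hconn hdiam hvv' hr.1 hr.2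
    have h12 : z₁ = z₂ ∨ G.Adj z₁ z₂ := by
      rcases hT z₁ with rfl | rfl | rfl <;> rcases hT z₂ with rfl | rfl | rfl <;>
        simp_all [G.adj_comm]
    rcases h12 with rfl | h12
    · simp at hz
    · simp [dist_eq_one_iff_adj.mpr h12] at hz
  · refine (hpairs v w hne).resolve_right fun h0 => ?_
    obtain ⟨m, hm⟩ := hconn.commonNeighbors_nonempty_of_dist_le_two (hdiam v w) hne hnadj
    rw [← card_commonNeighbors_eq_commonNbrs, Fintype.card_eq_zero_iff] at h0
    exact h0.false ⟨m, hm⟩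

theorem IsTypeA.not_adj (hx : IsTypeA G b x) (hu : u ∈ dezaB G b x) : ¬ G.Adj x u := by
  intro hxu
  have : u ∈ dezaB G b x ∩ G.neighborFinset x := mem_inter.mpr ⟨hu, by simpa using hxu⟩
  rw [hx] at this
  exact notMem_empty u this

theorem IsTypeA.commonNbrs_eq (hD : IsDezaGraph G n k b a) (hx : IsTypeA G b x)
    (hp : G.Adj x p) : commonNbrs G p x = a :=
  (hD.2.2.2.2 p x hp.ne').resolve_left fun h => hx.not_adj (by simp [dezaB, hp.ne', h]) hp

theorem IsDezaGraph.commonNbrs_eq_of_adj_of_not_adj (hD : IsDezaGraph G n (b + 1) b a)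
    (hpq : G.Adj p q) (hpx : G.Adj p x) (hqx : ¬ G.Adj q x) (hxq : x ≠ q) :
    commonNbrs G p q = a :=
  (hD.2.2.2.2 p q hpq.ne).resolve_left fun h =>
    hqx (adj_of_commonNbrs_eq hD.2.2.1 h hpq (G.irrefl) hpx hxq)

theorem degree_le_commonNbrs_add_one (h : ∀ r, G.Adj x r → r ≠ y → G.Adj u r) :
    G.degree x ≤ commonNbrs G u x + 1 := by
  have hsub : G.neighborFinset x ⊆ insert y (G.neighborFinset u ∩ G.neighborFinset x) := by
    intro r
    simp only [mem_insert, mem_inter, mem_neighborFinset]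
    intro hxr
    by_cases hry : r = y
    · exact Or.inl hry
    · exact Or.inr ⟨h r hxr hry, hxr⟩
  rw [← card_neighborFinset_eq_degree]
  exact (card_le_card hsub).trans (card_insert_le _ _)

theorem degree_le_commonNbrs_add_two (hu : ∀ r, G.Adj x r → r ≠ y → G.Adj u r)
    (hw : ∀ r, G.Adj x r → r ≠ z → G.Adj w r) : G.degree x ≤ commonNbrs G u w + 2 := by
  have hsub : G.neighborFinset x ⊆
      insert y (insert z (G.neighborFinset u ∩ G.neighborFinset w)) := by
    intro r
    simp only [mem_insert, mem_inter, mem_neighborFinset]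
    intro hxr
    by_cases hry : r = y
    · exact Or.inl hry
    by_cases hrz : r = z
    · exact Or.inr (Or.inl hrz)
    exact Or.inr (Or.inr ⟨hu r hxr hry, hw r hxr hrz⟩)
  have h₁ := card_le_card hsub
  have h₂ := card_insert_le y (insert z (G.neighborFinset u ∩ G.neighborFinset w))
  have h₃ := card_insert_le z (G.neighborFinset u ∩ G.neighborFinset w)
  rw [card_neighborFinset_eq_degree] at h₁
  unfold commonNbrs
  omega

theorem commonNbrs_add_three_le_degree (hpx : G.Adj p x) (hpu : G.Adj p u) (hpw : G.Adj p w)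
    (hux : u ≠ x) (hwx : w ≠ x) (huw : u ≠ w) (hxu : ¬ G.Adj x u) (hxw : ¬ G.Adj x w) :
    commonNbrs G p x + 3 ≤ G.degree p := by
  have hsub : {x, u, w} ⊆ G.neighborFinset p \ G.neighborFinset x := by
    simp [insert_subset_iff, hpx, hpu, hpw, hxu, hxw]
  have h3 := card_le_card hsub
  rw [card_insert_of_notMem (by simp [hux.symm, hwx.symm]), card_pair huw] at h3
  rw [← card_neighborFinset_eq_degree, ← card_inter_add_card_sdiff _ (G.neighborFinset x)]
  unfold commonNbrs
  omega

theorem IsTypeA.not_adj_of_mem_dezaB (hG : IsStrictlyDezaGraph G n (b + 1) b a)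
    (hx : IsTypeA G b x) (hu : u ∈ dezaB G b x) (hw : w ∈ dezaB G b x) : ¬ G.Adj u w := by
  intro huw
  have hD := hG.1
  have hreg := hD.2.2.1
  have hab := hG.lt
  have hxu := hx.not_adj hu
  have hxw := hx.not_adj hw
  obtain ⟨hux, hbu⟩ := (mem_filter.mp hu).2
  obtain ⟨hwx, hbw⟩ := (mem_filter.mp hw).2
  have hbu' := (commonNbrs_comm x u).trans hbu
  have hbw' := (commonNbrs_comm x w).trans hbw
  obtain ⟨yu, hxyu, huyu⟩ := exists_adj_not_adj_of_commonNbrs_eq hreg hbu'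
  obtain ⟨yw, hxyw, hwyw⟩ := exists_adj_not_adj_of_commonNbrs_eq hreg hbw'
  have hyu : ∀ r, G.Adj x r → r ≠ yu → G.Adj u r :=
    fun r => adj_of_commonNbrs_eq hreg hbu' hxyu huyu
  have hyw : ∀ r, G.Adj x r → r ≠ yw → G.Adj w r :=
    fun r => adj_of_commonNbrs_eq hreg hbw' hxyw hwyw
  rcases eq_or_ne yu yw with rfl | hne
  · have hpy : ∀ p, G.Adj x p → p ≠ yu → G.Adj yu p := fun p hxp hp =>
      (adj_of_commonNbrs_le hyu (hyw p hxp hp).symm huw hxw <| by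
        rw [hD.commonNbrs_eq_of_adj_of_not_adj (hyu p hxp hp).symm hxp.symm (fun h => hxu h.symm)
          hux.symm, hx.commonNbrs_eq hD hxp]).symm
    have := degree_le_commonNbrs_add_one hpy
    rw [hreg x, hx.commonNbrs_eq hD hxyu] at this
    omega
  · have hcuw := hD.commonNbrs_eq_of_adj_of_not_adj huw (hyu yw hxyw hne.symm) hwyw
      (fun h => hxw (h ▸ hxyw))
    have hlow := degree_le_commonNbrs_add_two hyu hyw
    rw [hreg x, hcuw] at hlow
    obtain rfl | hb := (by omega : b = 1 ∨ 2 ≤ b)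
    · obtain rfl : a = 0 := by omega
      exact not_isStrictlyDezaGraph_two_one_zero hG
    · obtain ⟨p, hp⟩ := card_pos.mp (show 0 < commonNbrs G u w by omega)
      simp only [mem_inter, mem_neighborFinset] at hp
      have hxp := adj_of_commonNbrs_eq hreg hbu huw hxw hp.1 hp.2.ne'
      have := commonNbrs_add_three_le_degree hxp.symm hp.1.symm hp.2.symm hux hwx huw.ne hxu hxw
      rw [hx.commonNbrs_eq hD hxp, hreg p] at this
      omega

end Deza

theorem stmt7_general {V : Type u} [Fintype V] [DecidableEq V] (G : SimpleGraph V)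
    [DecidableRel G.Adj] (n k b a : ℕ)
    (hG : IsStrictlyDezaGraph G n k b a) (hk : k = b + 1) :
    ∀ x : V, IsTypeA G b x →
      (∀ u ∈ dezaBc G b x, ∀ w ∈ dezaBc G b x, ¬ G.Adj u w) ∧
      (dezaBc G b x).card = (dezaB G b x).card + 1 := by
  subst hk
  intro x hx
  refine ⟨?_, card_insert_of_notMem (by simp [dezaB])⟩
  simp only [dezaBc, mem_insert]
  rintro u (rfl | hu) w (rfl | hw)
  · exact G.irrefl
  · exact hx.not_adj hw
  · exact fun h => hx.not_adj hu h.symm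
  · exact hx.not_adj_of_mem_dezaB hG hu hw

theorem stmt7 {V : Type u} [Fintype V] [DecidableEq V] (G : SimpleGraph V)
    [DecidableRel G.Adj] (n k b a : ℕ)
    (hG : IsStrictlyDezaGraph G n k b a) (hk : k = b + 1)
    (hβ : ∀ v : V, 1 < (dezaB G b v).card) :
    ∀ x : V, IsTypeA G b x →
      (∀ u ∈ dezaBc G b x, ∀ w ∈ dezaBc G b x, ¬ G.Adj u w) ∧
      (dezaBc G b x).card = (dezaB G b x).card + 1 :=
  stmt7_general G n k b a hG hk
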